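/- arXiv:0910.5131 — 2 statements merged into one kernel-verified Lean document; each statement's English description precedes it below -/
import Mathlib

section
/- Let L be a bounded distributive lattice and f : L^n → L a polynomial function. For each j ∈ [n], the j-th variable is essential in f if and only if there exists J ⊆ [n] \ {j} such that f(e_J) < f(e_{J ∪ {j}}). -/
inductive IsLatPoly {L : Type*} [DistribLattice L] [BoundedOrder L] {n : ℕ} :
    ((Fin n → L) → L) → Prop
  | proj (i : Fin n) : IsLatPoly (fun x => x i)
  | const (c : L) : IsLatPoly (fun _ => c)
  | inf {f g : (Fin n → L) → L} : IsLatPoly f → IsLatPoly g → IsLatPoly (fun x => f x ⊓ g x)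
  | sup {f g : (Fin n → L) → L} : IsLatPoly f → IsLatPoly g → IsLatPoly (fun x => f x ⊔ g x)

def EssentialAt {A B : Type*} {n : ℕ} (f : (Fin n → A) → B) (j : Fin n) : Prop :=
  ∃ (a : Fin n → A) (b : A), f (Function.update a j b) ≠ f a

noncomputable def essArity {A B : Type*} {n : ℕ} (f : (Fin n → A) → B) : ℕ :=
  Set.ncard {j | EssentialAt f j}

def charVec {L : Type*} [DistribLattice L] [BoundedOrder L] {n : ℕ}
    (I : Finset (Fin n)) : Fin n → L :=
  fun i => if i ∈ I then ⊤ else ⊥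

section Aux

variable {L : Type*} [DistribLattice L] [BoundedOrder L] {n : ℕ}

lemma IsLatPoly.monotone {f : (Fin n → L) → L} (hf : IsLatPoly f) : Monotone f := by
  induction hf with
  | proj i => exact fun a b h => h i
  | const c => exact monotone_const
  | inf _ _ ihf ihg => exact fun a b h => inf_le_inf (ihf h) (ihg h)
  | sup _ _ ihf ihg => exact fun a b h => sup_le_sup (ihf h) (ihg h)

lemma charVec_mono {I J : Finset (Fin n)} (h : I ⊆ J) :
    (charVec I : Fin n → L) ≤ charVec J := by
  intro i
  simp only [charVec]
  by_cases hi : i ∈ I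
  · simp [hi, h hi]
  · simp [hi]

lemma latPoly_dnf {f : (Fin n → L) → L} (hf : IsLatPoly f) (x : Fin n → L) :
    f x = (Finset.univ : Finset (Finset (Fin n))).sup
      (fun I => f (charVec I) ⊓ I.inf x) := by
  induction hf with
  | proj i =>
    show x i = Finset.univ.sup fun I => charVec I i ⊓ I.inf x
    apply le_antisymm
    · have : x i = charVec ({i} : Finset (Fin n)) i ⊓ ({i} : Finset (Fin n)).inf x := by
        simp [charVec]
      rw [this]
      exact Finset.le_sup (f := fun I : Finset (Fin n) => charVec I i ⊓ I.inf x)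
        (Finset.mem_univ {i})
    · apply Finset.sup_le
      intro I _
      by_cases hi : i ∈ I
      · exact inf_le_right.trans (Finset.inf_le hi)
      · simp [charVec, hi]
  | const c =>
    show c = Finset.univ.sup fun I : Finset (Fin n) => c ⊓ I.inf x
    apply le_antisymm
    · have : c = c ⊓ (∅ : Finset (Fin n)).inf x := by simp
      refine this.trans_le ?_
      exact Finset.le_sup (f := fun I : Finset (Fin n) => c ⊓ I.inf x) (Finset.mem_univ ∅)
    · exact Finset.sup_le fun I _ => inf_le_left
  | @inf f g hf hg ihf ihg =>
    show f x ⊓ g x = Finset.univ.sup fun I => (f (charVec I) ⊓ g (charVec I)) ⊓ I.inf x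
    rw [ihf, ihg]
    apply le_antisymm
    · rw [Finset.sup_inf_distrib_right]
      apply Finset.sup_le
      intro I _
      rw [Finset.sup_inf_distrib_left]
      apply Finset.sup_le
      intro J _
      have h1 : f (charVec I) ⊓ I.inf x ⊓ (g (charVec J) ⊓ J.inf x)
          ≤ (f (charVec (I ∪ J)) ⊓ g (charVec (I ∪ J))) ⊓ (I ∪ J).inf x := by
        rw [Finset.inf_union]
        have hfm := hf.monotone (charVec_mono (L := L) (Finset.subset_union_left (s₁ := I) (s₂ := J)))
        have hgm := hg.monotone (charVec_mono (L := L) (Finset.subset_union_right (s₁ := I) (s₂ := J)))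
        refine le_inf (le_inf ?_ ?_) ?_
        · exact inf_le_left.trans (inf_le_left.trans hfm)
        · exact inf_le_right.trans (inf_le_left.trans hgm)
        · exact inf_le_inf inf_le_right inf_le_right
      exact h1.trans (Finset.le_sup
        (f := fun K : Finset (Fin n) => (f (charVec K) ⊓ g (charVec K)) ⊓ K.inf x)
        (Finset.mem_univ (I ∪ J)))
    · apply Finset.sup_le
      intro K _
      refine le_inf ?_ ?_
      · exact le_trans (inf_le_inf inf_le_left le_rfl)
          (Finset.le_sup (f := fun I : Finset (Fin n) => f (charVec I) ⊓ I.inf x)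
            (Finset.mem_univ K))
      · exact le_trans (inf_le_inf inf_le_right le_rfl)
          (Finset.le_sup (f := fun I : Finset (Fin n) => g (charVec I) ⊓ I.inf x)
            (Finset.mem_univ K))
  | @sup f g hf hg ihf ihg =>
    show f x ⊔ g x = Finset.univ.sup fun I => (f (charVec I) ⊔ g (charVec I)) ⊓ I.inf x
    rw [ihf, ihg, ← Finset.sup_sup]
    refine Finset.sup_congr rfl fun I _ => ?_
    simp only [Pi.sup_apply, inf_sup_right]

lemma charVec_update (J : Finset (Fin n)) (hj : j ∉ J) :
    Function.update (charVec J : Fin n → L) j ⊤ = charVec (insert j J) := by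
  funext i
  rcases eq_or_ne i j with rfl | hi
  · simp [charVec, Function.update_self]
  · rw [Function.update_of_ne hi]
    simp [charVec, Finset.mem_insert, hi]

end Aux

theorem essential_iff_strict_coefficient {L : Type*} [DistribLattice L] [BoundedOrder L]
    {n : ℕ} {f : (Fin n → L) → L} (hf : IsLatPoly f) (j : Fin n) :
    EssentialAt f j ↔
      ∃ J : Finset (Fin n), j ∉ J ∧ f (charVec J) < f (charVec (insert j J)) := by
  constructor
  · intro hess
    by_contra hcon
    push_neg at hcon
    have heq : ∀ J : Finset (Fin n), j ∉ J →
        f (charVec (insert j J)) = f (charVec J) := by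
      intro J hJ
      have hle : f (charVec J) ≤ f (charVec (insert j J)) :=
        hf.monotone (charVec_mono (Finset.subset_insert _ _))
      exact ((hle.lt_or_eq).resolve_left (hcon J hJ)).symm
    -- f equals a sup over sets not containing j
    have key : ∀ x : Fin n → L,
        f x = (Finset.univ.filter (fun I : Finset (Fin n) => j ∉ I)).sup
          (fun I => f (charVec I) ⊓ I.inf x) := by
      intro x
      rw [latPoly_dnf hf x]
      apply le_antisymm
      · apply Finset.sup_le
        intro I _
        by_cases hjI : j ∈ I
        · set I' := I.erase j with hI'
          have hins : insert j I' = I := Finset.insert_erase hjI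
          have hfeq : f (charVec I) = f (charVec I') := by
            rw [← hins]; exact heq I' (Finset.notMem_erase _ _)
          have hinf : I.inf x ≤ I'.inf x :=
            Finset.inf_mono (Finset.erase_subset _ _)
          refine le_trans (inf_le_inf (le_of_eq hfeq) hinf) ?_
          exact Finset.le_sup (f := fun I => f (charVec I) ⊓ I.inf x)
            (Finset.mem_filter.mpr ⟨Finset.mem_univ I', Finset.notMem_erase j I⟩)
        · exact Finset.le_sup (f := fun I => f (charVec I) ⊓ I.inf x)
            (Finset.mem_filter.mpr ⟨Finset.mem_univ I, hjI⟩)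
      · exact Finset.sup_mono (Finset.filter_subset _ _)
    rcases hess with ⟨a, b, hab⟩
    apply hab
    rw [key (Function.update a j b), key a]
    refine Finset.sup_congr rfl fun I hI => ?_
    have hjI : j ∉ I := (Finset.mem_filter.mp hI).2
    congr 1
    refine Finset.inf_congr rfl fun i hi => ?_
    refine Function.update_of_ne ?_ _ _
    rintro rfl; exact hjI hi
  · rintro ⟨J, hjJ, hlt⟩
    exact ⟨charVec J, ⊤, by rw [charVec_update J hjJ]; exact ne_of_gt hlt⟩
end

section
/- If a polynomial function f : L^n → L over a bounded distributive lattice satisfies f(e_J) = f(e_{J ∪ {j}}) for all J ⊆ [n] \ {j}, then f does not depend on its j-th variable, i.e., f(a) = f(a') whenever a and a' agree on all coordinates except possibly the j-th. -/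
lemma IsLatPoly.mono {L : Type*} [DistribLattice L] [BoundedOrder L] {n : ℕ}
    {f : (Fin n → L) → L} (hf : IsLatPoly f) :
    ∀ a b : Fin n → L, (∀ i, a i ≤ b i) → f a ≤ f b := by
  induction hf with
  | proj i => intro a b hab; exact hab i
  | const c => intro a b _; exact le_rfl
  | inf hf hg ihf ihg => intro a b hab; exact inf_le_inf (ihf a b hab) (ihg a b hab)
  | sup hf hg ihf ihg => intro a b hab; exact sup_le_sup (ihf a b hab) (ihg a b hab)

lemma charVec_mono_s7 {L : Type*} [DistribLattice L] [BoundedOrder L] {n : ℕ}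
    {I K : Finset (Fin n)} (hIK : I ⊆ K) (i : Fin n) :
    (charVec I i : L) ≤ charVec K i := by
  unfold charVec
  by_cases hi : i ∈ I
  · simp [hi, hIK hi]
  · simp [hi]

/-- Goodstein normal form for lattice polynomials. -/
lemma IsLatPoly.normal {L : Type*} [DistribLattice L] [BoundedOrder L] {n : ℕ}
    {f : (Fin n → L) → L} (hf : IsLatPoly f) (a : Fin n → L) :
    f a = (Finset.univ : Finset (Fin n)).powerset.sup
      (fun I => f (charVec I) ⊓ I.inf a) := by
  induction hf with
  | proj i =>
    apply le_antisymm
    · have h1 : ({i} : Finset (Fin n)) ∈ (Finset.univ : Finset (Fin n)).powerset := by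
        simp
      refine le_trans ?_ (Finset.le_sup (f := fun I => charVec I i ⊓ I.inf a) h1)
      simp [charVec]
    · apply Finset.sup_le
      intro I _
      by_cases hi : i ∈ I
      · exact le_trans inf_le_right (Finset.inf_le hi)
      · simp [charVec, hi]
  | const c =>
    apply le_antisymm
    · have h1 : (∅ : Finset (Fin n)) ∈ (Finset.univ : Finset (Fin n)).powerset := by simp
      refine le_trans ?_ (Finset.le_sup (f := fun I => c ⊓ I.inf a) h1)
      simp
    · exact Finset.sup_le fun I _ => inf_le_left
  | @inf f g hf hg ihf ihg =>
    show f a ⊓ g a = _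
    rw [ihf, ihg, Finset.sup_inf_sup]
    apply le_antisymm
    · apply Finset.sup_le
      rintro ⟨I, J⟩ hIJ
      simp only [Finset.mem_product, Finset.mem_powerset] at hIJ
      have hK : I ∪ J ∈ (Finset.univ : Finset (Fin n)).powerset := by simp
      apply le_trans _ (Finset.le_sup hK)
      have hfI : f (charVec I) ≤ f (charVec (I ∪ J)) :=
        hf.mono _ _ (charVec_mono_s7 Finset.subset_union_left)
      have hgJ : g (charVec J) ≤ g (charVec (I ∪ J)) :=
        hg.mono _ _ (charVec_mono_s7 Finset.subset_union_right)
      have hinf : I.inf a ⊓ J.inf a = (I ∪ J).inf a := (Finset.inf_union).symm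
      calc f (charVec I) ⊓ I.inf a ⊓ (g (charVec J) ⊓ J.inf a)
          = (f (charVec I) ⊓ g (charVec J)) ⊓ (I.inf a ⊓ J.inf a) := by
            ac_rfl
        _ ≤ (f (charVec (I ∪ J)) ⊓ g (charVec (I ∪ J))) ⊓ (I ∪ J).inf a := by
            rw [hinf]; exact inf_le_inf_right _ (inf_le_inf hfI hgJ)
    · apply Finset.sup_le
      intro I hI
      have hK : (I, I) ∈ (Finset.univ : Finset (Fin n)).powerset ×ˢ
          (Finset.univ : Finset (Fin n)).powerset := by
        simp [Finset.mem_product, Finset.mem_powerset]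
      apply le_trans _ (Finset.le_sup hK)
      simp only
      calc f (charVec I) ⊓ g (charVec I) ⊓ I.inf a
          ≤ (f (charVec I) ⊓ I.inf a) ⊓ (g (charVec I) ⊓ I.inf a) := by
            apply le_inf
            · exact inf_le_inf_right _ inf_le_left
            · exact inf_le_inf_right _ inf_le_right
  | @sup f g hf hg ihf ihg =>
    show f a ⊔ g a = _
    rw [ihf, ihg]
    apply le_antisymm
    · apply sup_le <;>
      · apply Finset.sup_le
        intro I hI
        apply le_trans _ (Finset.le_sup hI)
        simp only
        exact inf_le_inf_right _ (by simp)
    · apply Finset.sup_le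
      intro I hI
      rw [inf_sup_right]
      exact sup_le_sup (Finset.le_sup (f := fun I => f (charVec I) ⊓ I.inf a) hI)
        (Finset.le_sup (f := fun I => g (charVec I) ⊓ I.inf a) hI)

theorem not_depends_of_coefficients_eq {L : Type*} [DistribLattice L] [BoundedOrder L]
    {n : ℕ} {f : (Fin n → L) → L} (hf : IsLatPoly f) (j : Fin n)
    (h : ∀ J : Finset (Fin n), j ∉ J → f (charVec J) = f (charVec (insert j J))) :
    ∀ a a' : Fin n → L, (∀ k, k ≠ j → a k = a' k) → f a = f a' := by
  have key : ∀ a a' : Fin n → L, (∀ k, k ≠ j → a k = a' k) → f a ≤ f a' := by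
    intro a a' hagree
    rw [hf.normal a, hf.normal a']
    apply Finset.sup_le
    intro I hI
    by_cases hj : j ∈ I
    · have hI' : I.erase j ∈ (Finset.univ : Finset (Fin n)).powerset := by simp
      apply le_trans _ (Finset.le_sup hI')
      have hcoef : f (charVec (I.erase j)) = f (charVec I) := by
        have := h (I.erase j) (Finset.notMem_erase j I)
        rw [Finset.insert_erase hj] at this
        exact this
      rw [hcoef]
      apply inf_le_inf_left
      have hsub : I.erase j ⊆ I := Finset.erase_subset j I
      calc I.inf a ≤ (I.erase j).inf a := Finset.inf_mono hsub
        _ = (I.erase j).inf a' := Finset.inf_congr rfl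
            (fun k hk => hagree k (Finset.ne_of_mem_erase hk))
    · apply le_trans _ (Finset.le_sup hI)
      apply inf_le_inf_left
      exact le_of_eq (Finset.inf_congr rfl (fun k hk => hagree k (fun e => hj (e ▸ hk))))
  intro a a' hagree
  exact le_antisymm (key a a' hagree) (key a' a (fun k hk => (hagree k hk).symm))
end
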